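/- The category of partial representations of G on K-modules is isomorphic to the category of left K_par G-modules, via [g]·m := π_g(m). -/

import Mathlib

/-- The defining relations of Exel's semigroup `S(G)` of a group `G`:
`[1] = 1`, `[s⁻¹][s][t] = [s⁻¹][st]`, `[s][t][t⁻¹] = [st][t⁻¹]`. -/
inductive ExelRel (G : Type*) [Group G] : FreeMonoid G → FreeMonoid G → Prop
  | one : ExelRel G (FreeMonoid.of 1) 1
  | left (s t : G) : ExelRel G
      (FreeMonoid.of s⁻¹ * FreeMonoid.of s * FreeMonoid.of t)
      (FreeMonoid.of s⁻¹ * FreeMonoid.of (s * t))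
  | right (s t : G) : ExelRel G
      (FreeMonoid.of s * FreeMonoid.of t * FreeMonoid.of t⁻¹)
      (FreeMonoid.of (s * t) * FreeMonoid.of t⁻¹)

/-- The congruence on the free monoid on `G` generated by the Exel relations. -/
def ExelCon (G : Type*) [Group G] : Con (FreeMonoid G) := conGen (ExelRel G)

/-- Exel's semigroup (an inverse monoid) `S(G)` of the group `G`. -/
abbrev ExelMonoid (G : Type*) [Group G] := (ExelCon G).Quotient

/-- The canonical generator `[g]` of `S(G)`. -/
def ExelMonoid.of {G : Type*} [Group G] (g : G) : ExelMonoid G :=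
  (ExelCon G).mk' (FreeMonoid.of g)

/-- The idempotent `e_g := [g][g⁻¹]` in `S(G)`. -/
def ExelMonoid.e {G : Type*} [Group G] (g : G) : ExelMonoid G :=
  ExelMonoid.of g * ExelMonoid.of g⁻¹

/-- The partial group algebra `K_par G`: the semigroup `K`-algebra of Exel's semigroup. -/
abbrev KparG (K G : Type*) [CommRing K] [Group G] := MonoidAlgebra K (ExelMonoid G)

/-- The canonical generator `[g]` of `K_par G`. -/
noncomputable def pr (K : Type*) {G : Type*} [CommRing K] [Group G] (g : G) : KparG K G :=
  MonoidAlgebra.of K (ExelMonoid G) (ExelMonoid.of g)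

/-- The idempotent `e_g := [g][g⁻¹]` in `K_par G`. -/
noncomputable def eK (K : Type*) {G : Type*} [CommRing K] [Group G] (g : G) : KparG K G :=
  pr K g * pr K g⁻¹

open CategoryTheory

universe u

/-- An object of the category of partial representations of `G` on `K`-modules. -/
structure ParRep (K G : Type u) [CommRing K] [Group G] : Type (u + 1) where
  carrier : Type u
  [isAddCommGroup : AddCommGroup carrier]
  [isModule : Module K carrier]
  π : G → carrier →ₗ[K] carrier
  map_one : π 1 = LinearMap.id
  rel_left : ∀ s t : G, π s ∘ₗ π t ∘ₗ π t⁻¹ = π (s * t) ∘ₗ π t⁻¹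
  rel_right : ∀ s t : G, π s⁻¹ ∘ₗ π s ∘ₗ π t = π s⁻¹ ∘ₗ π (s * t)

attribute [instance] ParRep.isAddCommGroup ParRep.isModule

/-- The category of partial representations of `G` on `K`-modules: morphisms are
`K`-linear maps intertwining the partial representations. -/
instance ParRep.category (K G : Type u) [CommRing K] [Group G] :
    Category (ParRep K G) where
  Hom X Y := { f : X.carrier →ₗ[K] Y.carrier // ∀ g : G, f ∘ₗ X.π g = Y.π g ∘ₗ f }
  id X := ⟨LinearMap.id, fun g => by ext m; rfl⟩
  comp {X Y Z} f g := ⟨g.1 ∘ₗ f.1, fun h => by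
    rw [LinearMap.comp_assoc, f.2, ← LinearMap.comp_assoc, g.2, LinearMap.comp_assoc]⟩
  id_comp f := Subtype.ext (LinearMap.comp_id f.1)
  comp_id f := Subtype.ext (LinearMap.id_comp f.1)
  assoc f g h := Subtype.ext (LinearMap.comp_assoc f.1 g.1 h.1).symm

/-! A map `π : G → End_K(M)` is a partial representation exactly when it satisfies Exel's
relations, so it factors uniquely through `S(G)` and then through a `K`-algebra map
`K_par G → End_K(M)`, i.e. a `K_par G`-module structure with `[g] • m = π g m`. Conversely the
generators `[g]` of a `K_par G`-module act by a partial representation. Because `K_par G` is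
generated as a `K`-algebra by the `[g]`, the two constructions are inverse to each other on the
nose (also on the underlying `K`-module structures), and a `K`-linear map intertwines the `π`s
exactly when it is `K_par G`-linear. -/

namespace ExelMonoid

variable {G : Type*} [Group G]

lemma of_one : of (1 : G) = 1 :=
  Quotient.sound (ConGen.Rel.of _ _ ExelRel.one)

lemma rel_left (s t : G) : of s⁻¹ * of s * of t = of s⁻¹ * of (s * t) :=
  Quotient.sound (ConGen.Rel.of _ _ (ExelRel.left s t))

lemma rel_right (s t : G) : of s * of t * of t⁻¹ = of (s * t) * of t⁻¹ :=
  Quotient.sound (ConGen.Rel.of _ _ (ExelRel.right s t))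

lemma closure_range_of : Submonoid.closure (Set.range (of : G → ExelMonoid G)) = ⊤ := by
  change Submonoid.closure (Set.range ((ExelCon G).mk' ∘ FreeMonoid.of)) = ⊤
  rw [Set.range_comp, ← MonoidHom.map_mclosure, FreeMonoid.closure_range_of,
    ← MonoidHom.mrange_eq_map, Con.mrange_mk']

variable {M : Type*} [Monoid M] (π : G → M) (map_one : π 1 = 1)
  (rel_left : ∀ s t, π s⁻¹ * π s * π t = π s⁻¹ * π (s * t))
  (rel_right : ∀ s t, π s * π t * π t⁻¹ = π (s * t) * π t⁻¹)

def lift : ExelMonoid G →* M :=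
  (ExelCon G).lift (FreeMonoid.lift π) <| Con.conGen_le.mpr <| by
    rintro x y (⟨⟩ | ⟨s, t⟩ | ⟨s, t⟩) <;> simp [Con.ker_rel, map_one, rel_left, rel_right]

@[simp] lemma lift_of (g : G) : lift π map_one rel_left rel_right (of g) = π g :=
  FreeMonoid.lift_eval_of π g

end ExelMonoid

namespace KparG

variable (K : Type*) {G : Type*} [CommRing K] [Group G]

lemma pr_one : pr K (1 : G) = 1 := by
  rw [pr, ExelMonoid.of_one, map_one]

lemma pr_rel_left (s t : G) : pr K s⁻¹ * pr K s * pr K t = pr K s⁻¹ * pr K (s * t) := by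
  simp only [pr, ← map_mul, ExelMonoid.rel_left]

lemma pr_rel_right (s t : G) : pr K s * pr K t * pr K t⁻¹ = pr K (s * t) * pr K t⁻¹ := by
  simp only [pr, ← map_mul, ExelMonoid.rel_right]

lemma adjoin_range_pr : Algebra.adjoin K (Set.range (pr K : G → KparG K G)) = ⊤ := by
  refine Algebra.eq_top_iff.mpr fun a => ?_
  induction a using MonoidAlgebra.induction_on with
  | of x =>
    have hx : x ∈ Submonoid.closure (Set.range ExelMonoid.of) := by
      rw [ExelMonoid.closure_range_of]; trivial
    induction hx using Submonoid.closure_induction with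
    | mem x hx => obtain ⟨g, rfl⟩ := hx; exact Algebra.subset_adjoin ⟨g, rfl⟩
    | one => rw [map_one]; exact one_mem _
    | mul x y _ _ hx hy => rw [map_mul]; exact mul_mem hx hy
  | add a b ha hb => exact add_mem ha hb
  | smul k a ha => exact Subalgebra.smul_mem _ ha k

variable {K}
variable {A : Type*} [Ring A] [Algebra K A] (π : G → A) (map_one : π 1 = 1)
  (rel_left : ∀ s t, π s⁻¹ * π s * π t = π s⁻¹ * π (s * t))
  (rel_right : ∀ s t, π s * π t * π t⁻¹ = π (s * t) * π t⁻¹)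

noncomputable def lift : KparG K G →ₐ[K] A :=
  MonoidAlgebra.lift K A (ExelMonoid G) (ExelMonoid.lift π map_one rel_left rel_right)

@[simp] lemma lift_pr (g : G) : lift π map_one rel_left rel_right (pr K g) = π g := by
  rw [lift, pr, MonoidAlgebra.lift_of, ExelMonoid.lift_of]

variable (K)

variable (G) in
noncomputable abbrev restrictModule (M : Type*) [AddCommGroup M] [Module (KparG K G) M] :
    Module K M :=
  Module.compHom M (algebraMap K (KparG K G))

variable (G) in
lemma isScalarTower_restrictModule (M : Type*) [AddCommGroup M] [Module (KparG K G) M] :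
    letI := restrictModule K G M
    IsScalarTower K (KparG K G) M :=
  letI := restrictModule K G M
  ⟨fun k a m => by rw [Algebra.smul_def, mul_smul]; rfl⟩

end KparG

lemma ModuleCat.eqToHom_apply {R : Type u} [Ring R] {M N : ModuleCat.{u} R} (h : M = N)
    (m : M) : eqToHom h m = cast (congrArg ModuleCat.carrier h) m := by
  subst h; rfl

namespace ParRep

open KparG

variable {K G : Type u} [CommRing K] [Group G]

noncomputable def toEndAlgHom (X : ParRep K G) : KparG K G →ₐ[K] Module.End K X.carrier :=
  lift X.π X.map_one X.rel_right X.rel_left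

@[simp] lemma toEndAlgHom_pr (X : ParRep K G) (g : G) : X.toEndAlgHom (pr K g) = X.π g :=
  lift_pr ..

lemma hom_comp_toEndAlgHom {X Y : ParRep K G} (f : X ⟶ Y) (a : KparG K G) :
    f.1 ∘ₗ X.toEndAlgHom a = Y.toEndAlgHom a ∘ₗ f.1 := by
  have ha : a ∈ Algebra.adjoin K (Set.range (pr K)) := by
    rw [adjoin_range_pr]; trivial
  induction ha using Algebra.adjoin_induction with
  | mem a ha =>
    obtain ⟨g, rfl⟩ := ha
    rw [toEndAlgHom_pr, toEndAlgHom_pr]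
    exact f.2 g
  | algebraMap k =>
    ext m
    simp only [AlgHom.commutes, LinearMap.comp_apply, Module.algebraMap_end_apply, map_smul]
  | add a b _ _ ha hb => rw [map_add, map_add, LinearMap.comp_add, LinearMap.add_comp, ha, hb]
  | mul a b _ _ ha hb =>
    rw [map_mul, map_mul, Module.End.mul_eq_comp, Module.End.mul_eq_comp, ← LinearMap.comp_assoc,
      ha, LinearMap.comp_assoc, hb, LinearMap.comp_assoc]

noncomputable abbrev kparGModule (X : ParRep K G) : Module (KparG K G) X.carrier :=
  Module.compHom X.carrier X.toEndAlgHom.toRingHom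

noncomputable def toModuleKparG : ParRep K G ⥤ ModuleCat.{u} (KparG K G) where
  obj X := letI := X.kparGModule; ModuleCat.of (KparG K G) X.carrier
  map {X Y} f := letI := X.kparGModule; letI := Y.kparGModule
    ModuleCat.ofHom
      { toFun := f.1
        map_add' := f.1.map_add
        map_smul' := fun a m => LinearMap.congr_fun (hom_comp_toEndAlgHom f a) m }

noncomputable def ofModuleKparGObj (M : ModuleCat.{u} (KparG K G)) : ParRep K G :=
  letI := restrictModule K G M
  haveI := isScalarTower_restrictModule K G M
  let ρ := Algebra.lsmul K K M
  { carrier := M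
    π := fun g => ρ (pr K g)
    map_one := by rw [pr_one, _root_.map_one]; rfl
    rel_left := fun s t => by
      simp only [← Module.End.mul_eq_comp, ← map_mul, ← mul_assoc, pr_rel_right]
    rel_right := fun s t => by
      simp only [← Module.End.mul_eq_comp, ← map_mul, ← mul_assoc, pr_rel_left] }

lemma kparGModule_ofModuleKparGObj (M : ModuleCat.{u} (KparG K G)) :
    (ofModuleKparGObj M).kparGModule = M.isModule := by
  let := restrictModule K G M
  have := isScalarTower_restrictModule K G M
  have h : (ofModuleKparGObj M).toEndAlgHom = Algebra.lsmul K K M :=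
    AlgHom.ext_of_adjoin_eq_top (adjoin_range_pr K) <| by
      rintro _ ⟨g, rfl⟩; exact toEndAlgHom_pr _ g
  exact Module.ext' _ _ fun a m => LinearMap.congr_fun (congrArg (· a) h) m

noncomputable def ofModuleKparG : ModuleCat.{u} (KparG K G) ⥤ ParRep K G where
  obj M := ofModuleKparGObj M
  map {M N} f := letI := restrictModule K G M; letI := restrictModule K G N
    ⟨{ toFun := f.hom
       map_add' := map_add f.hom
       map_smul' := fun k (m : M) => map_smul f.hom (algebraMap K (KparG K G) k) m },
     fun g => LinearMap.ext fun (m : M) => map_smul f.hom (pr K g) m⟩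

lemma mk_eq_mk {M : Type u} {i : AddCommGroup M} {m₁ m₂ : Module K M}
    (π₁ : G → @LinearMap K K _ _ (RingHom.id K) M M i.toAddCommMonoid i.toAddCommMonoid m₁ m₁)
    (π₂ : G → @LinearMap K K _ _ (RingHom.id K) M M i.toAddCommMonoid i.toAddCommMonoid m₂ m₂)
    {h₁ h₂ h₃ h₁' h₂' h₃'} (hm : m₁ = m₂) (hπ : ∀ g x, π₁ g x = π₂ g x) :
    @ParRep.mk K G _ _ M i m₁ π₁ h₁ h₂ h₃ = @ParRep.mk K G _ _ M i m₂ π₂ h₁' h₂' h₃' := by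
  subst hm
  obtain rfl : π₁ = π₂ := funext fun g => LinearMap.ext (hπ g)
  rfl

lemma toModuleKparG_comp_ofModuleKparG_obj (X : ParRep K G) :
    (toModuleKparG ⋙ ofModuleKparG).obj X = X := by
  obtain @⟨M, _, _, π, h₁, h₂, h₃⟩ := X
  apply mk_eq_mk
  · refine Module.ext' _ _ fun k (m : M) => ?_
    change toEndAlgHom ⟨M, π, h₁, h₂, h₃⟩ (algebraMap K (KparG K G) k) m = k • m
    rw [AlgHom.commutes, Module.algebraMap_end_apply]
  · intro g m
    exact LinearMap.congr_fun (toEndAlgHom_pr ⟨M, π, h₁, h₂, h₃⟩ g) m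

lemma ofModuleKparG_comp_toModuleKparG_obj (M : ModuleCat.{u} (KparG K G)) :
    (ofModuleKparG ⋙ toModuleKparG).obj M = M := by
  obtain @⟨M, _, _⟩ := M
  exact congrArg (@ModuleCat.of (KparG K G) _ M _) (kparGModule_ofModuleKparGObj (ModuleCat.of _ M))

lemma eqToHom_val {X Y : ParRep K G} (h : X = Y) (m : X.carrier) :
    (eqToHom h).1 m = cast (congrArg ParRep.carrier h) m := by
  subst h; rfl

lemma toModuleKparG_comp_ofModuleKparG :
    toModuleKparG ⋙ ofModuleKparG = 𝟭 (ParRep K G) := by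
  refine CategoryTheory.Functor.ext toModuleKparG_comp_ofModuleKparG_obj fun X Y f => ?_
  apply Subtype.ext
  apply LinearMap.ext
  intro m
  change f.1 m = (eqToHom (toModuleKparG_comp_ofModuleKparG_obj Y).symm).1
    (f.1 ((eqToHom (toModuleKparG_comp_ofModuleKparG_obj X)).1 m))
  rw [eqToHom_val, eqToHom_val]
  -- both casts are along equalities of definitionally equal carriers
  rfl

lemma ofModuleKparG_comp_toModuleKparG :
    ofModuleKparG ⋙ toModuleKparG = 𝟭 (ModuleCat.{u} (KparG K G)) := by
  refine CategoryTheory.Functor.ext ofModuleKparG_comp_toModuleKparG_obj fun M N f => ?_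
  apply ModuleCat.hom_ext
  apply LinearMap.ext
  intro m
  change f m = eqToHom (ofModuleKparG_comp_toModuleKparG_obj N).symm
    (f (eqToHom (ofModuleKparG_comp_toModuleKparG_obj M) m))
  rw [ModuleCat.eqToHom_apply, ModuleCat.eqToHom_apply]
  rfl

end ParRep

/-- The category of partial representations of `G` on `K`-modules is isomorphic to the
category of left `K_par G`-modules (via `[g] • m := π g m`). -/
theorem parRep_iso_kparG_mod (K G : Type u) [CommRing K] [Group G] :
    Nonempty (Cat.of (ParRep K G) ≅ Cat.of (ModuleCat.{u} (KparG K G))) :=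
  ⟨{ hom := ParRep.toModuleKparG.toCatHom
     inv := ParRep.ofModuleKparG.toCatHom
     hom_inv_id := Cat.ext ParRep.toModuleKparG_comp_ofModuleKparG
     inv_hom_id := Cat.ext ParRep.ofModuleKparG_comp_toModuleKparG }⟩
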